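/- If the formula φ is satisfiable, then there exists a reconfiguration sequence from p_b to p_e in G_φ of length at most 2m(n+2). -/

import Mathlib

/-- Vertices of the graph `G_φ` (for a CNF formula with `n` variables and `m` clauses):
`s`, `t`, the vertices `beg_{j+1}` and `end_{j+1}` (for `j : Fin (2m)`), and the gadget
vertices `v(i+1, vs, cs, j+1)` (for `i : Fin n`, `vs cs : Bool`, `j : Fin (2m)`).
An index `i : Fin n` encodes level `i+1`, and `j : Fin (2m)` encodes depth `j+1`. -/
inductive PVert (n m : ℕ) : Type where
  | s : PVert n m
  | t : PVert n m
  | beg (j : Fin (2 * m)) : PVert n m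
  | en (j : Fin (2 * m)) : PVert n m
  | v (i : Fin n) (vs : Bool) (cs : Bool) (j : Fin (2 * m)) : PVert n m
deriving DecidableEq

/-- The depth of a vertex of `G_φ`. -/
def PVert.depth {n m : ℕ} : PVert n m → ℕ
  | PVert.s => 0
  | PVert.t => 2 * m + 1
  | PVert.beg j => (j : ℕ) + 1
  | PVert.en j => (j : ℕ) + 1
  | PVert.v _ _ _ j => (j : ℕ) + 1

/-- The level of a vertex of `G_φ` (`beg`-vertices have level `0`, `end`-vertices have
level `n+1`, the gadget vertex `v(i,vs,cs,j)` has level `i`; junk value `0` for `s`,`t`). -/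
def PVert.level {n m : ℕ} : PVert n m → ℕ
  | PVert.beg _ => 0
  | PVert.en _ => n + 1
  | PVert.v i _ _ _ => (i : ℕ) + 1
  | _ => 0

/-- The c-state of a vertex of `G_φ` (`beg`-vertices have c-state `0`, `end`-vertices have
c-state `1`, the gadget vertex `v(i,vs,cs,j)` has c-state `cs`; junk value `0` for `s`,`t`). -/
def PVert.cstate {n m : ℕ} : PVert n m → ℕ
  | PVert.beg _ => 0
  | PVert.en _ => 1
  | PVert.v _ _ cs _ => cond cs 1 0
  | _ => 0

/-- The (directed) edges of `G_φ`.  The CNF formula `φ` is recorded by its clauses: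
`(i, vs) ∈ φ jc` means that clause `C_{jc+1}` contains the literal asserting `x_{i+1} = vs`,
i.e. that setting `x_{i+1} = vs` satisfies clause `C_{jc+1}`. -/
def PEdge (n m : ℕ) (φ : Fin m → Finset (Fin n × Bool)) (a b : PVert n m) : Prop :=
  -- (a) gadget edges, same c-state: from depth j to depth j+1 inside a gadget
  (∃ (i : Fin n) (vs cs : Bool) (j j' : Fin (2 * m)), (j' : ℕ) = (j : ℕ) + 1 ∧
      a = PVert.v i vs cs j ∧ b = PVert.v i vs cs j') ∨
  -- (a) gadget edges, crossing: from even depth 2j to odd depth 2j+1, flipping the c-state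
  (∃ (i : Fin n) (vs cs : Bool) (j j' : Fin (2 * m)), (j' : ℕ) = (j : ℕ) + 1 ∧
      (j : ℕ) % 2 = 1 ∧ a = PVert.v i vs cs j ∧ b = PVert.v i vs (!cs) j') ∨
  -- (b) formula edges: from v(i,vs,1,2jc-1) to v(i,vs,0,2jc) when x_i = vs satisfies C_jc
  (∃ (i : Fin n) (vs : Bool) (j j' : Fin (2 * m)) (jc : Fin m), (j' : ℕ) = (j : ℕ) + 1 ∧
      (j : ℕ) = 2 * (jc : ℕ) ∧ (i, vs) ∈ φ jc ∧
      a = PVert.v i vs true j ∧ b = PVert.v i vs false j') ∨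
  -- (c) inter-level edges, same c-state: from level i+1, depth j-1 to level i, depth j
  (∃ (ihi ilo : Fin n) (vs' vs cs : Bool) (j j' : Fin (2 * m)), (ihi : ℕ) = (ilo : ℕ) + 1 ∧
      (j' : ℕ) = (j : ℕ) + 1 ∧ a = PVert.v ihi vs' cs j ∧ b = PVert.v ilo vs cs j') ∨
  -- (c) inter-level edges, crossing: from level i+1, even depth 2j to level i, depth 2j+1
  (∃ (ihi ilo : Fin n) (vs' vs cs : Bool) (j j' : Fin (2 * m)), (ihi : ℕ) = (ilo : ℕ) + 1 ∧
      (j' : ℕ) = (j : ℕ) + 1 ∧ (j : ℕ) % 2 = 1 ∧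
      a = PVert.v ihi vs' cs j ∧ b = PVert.v ilo vs (!cs) j') ∨
  -- (d) the begin path
  (∃ (j j' : Fin (2 * m)), (j' : ℕ) = (j : ℕ) + 1 ∧ a = PVert.beg j ∧ b = PVert.beg j') ∨
  -- (d) the end path
  (∃ (j j' : Fin (2 * m)), (j' : ℕ) = (j : ℕ) + 1 ∧ a = PVert.en j ∧ b = PVert.en j') ∨
  -- (d) from v(1,vs,0,j) to beg_{j+1}
  (∃ (i : Fin n) (vs : Bool) (j j' : Fin (2 * m)), (i : ℕ) = 0 ∧ (j' : ℕ) = (j : ℕ) + 1 ∧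
      a = PVert.v i vs false j ∧ b = PVert.beg j') ∨
  -- (d) from end_j to v(n,vs,1,j+1)
  (∃ (i : Fin n) (vs : Bool) (j j' : Fin (2 * m)), (i : ℕ) + 1 = n ∧ (j' : ℕ) = (j : ℕ) + 1 ∧
      a = PVert.en j ∧ b = PVert.v i vs true j') ∨
  -- edges from s to every vertex of depth 1
  (a = PVert.s ∧ b.depth = 1) ∨
  -- edges from every vertex of depth 2m to t
  (a.depth = 2 * m ∧ b = PVert.t)

/-- A shortest `(s,t)`-path in `G_φ`: a directed path from `s` to `t` with `2m+2` vertices,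
one vertex of each depth `0, 1, …, 2m+1`. -/
def IsStPath (n m : ℕ) (φ : Fin m → Finset (Fin n × Bool))
    (p : Fin (2 * m + 1 + 1) → PVert n m) : Prop :=
  p 0 = PVert.s ∧ p (Fin.last (2 * m + 1)) = PVert.t ∧
    (∀ i : Fin (2 * m + 1), PEdge n m φ (p i.castSucc) (p i.succ)) ∧
    (∀ d : Fin (2 * m + 1 + 1), (p d).depth = (d : ℕ))

/-- Two vertex sequences differ in exactly one position. -/
def DiffOne {N : ℕ} {α : Type*} (p q : Fin N → α) : Prop :=
  ∃ i, p i ≠ q i ∧ ∀ j, j ≠ i → p j = q j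

/-- `ρ 0, ρ 1, …, ρ ℓ` is a reconfiguration sequence of length `ℓ` from the shortest
`(s,t)`-path `p` to the shortest `(s,t)`-path `q` in `G_φ`. -/
def PReconfSeq (n m : ℕ) (φ : Fin m → Finset (Fin n × Bool))
    (ρ : ℕ → (Fin (2 * m + 1 + 1) → PVert n m)) (ℓ : ℕ)
    (p q : Fin (2 * m + 1 + 1) → PVert n m) : Prop :=
  ρ 0 = p ∧ ρ ℓ = q ∧ (∀ i ≤ ℓ, IsStPath n m φ (ρ i)) ∧
    ∀ i < ℓ, DiffOne (ρ i) (ρ (i + 1))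

/-- The path `p_b = (s, beg_1, …, beg_{2m}, t)`. -/
def pbP (n m : ℕ) : Fin (2 * m + 1 + 1) → PVert n m := fun d =>
  if h0 : (d : ℕ) = 0 then PVert.s
  else if h1 : (d : ℕ) ≤ 2 * m then PVert.beg ⟨(d : ℕ) - 1, by omega⟩
  else PVert.t

/-- The path `p_e = (s, end_1, …, end_{2m}, t)`. -/
def peP (n m : ℕ) : Fin (2 * m + 1 + 1) → PVert n m := fun d =>
  if h0 : (d : ℕ) = 0 then PVert.s
  else if h1 : (d : ℕ) ≤ 2 * m then PVert.en ⟨(d : ℕ) - 1, by omega⟩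
  else PVert.t


/-!
Fix a satisfying assignment `θ` and, for every clause, a variable whose value under `θ`
satisfies it. The reconfiguration climbs through the gadgets of the literals `x_i = θ i`, one
level at a time. A path through a single gadget is determined by its c-states, and it can sweep
to the next level (replacing its inner vertices from left to right, `2m` moves) when its
c-states are constant on the two depths of every clause block. While at level `i`, the block of
each clause witnessed by `x_i` is switched from c-state `0` to `1` in two moves through the
formula edge of that clause. Going from `p_b` through levels `1, …, n` to `p_e` takes `n + 1`
sweeps, and every clause is switched once, so `2m(n+1) + 2m` moves suffice; at the end all
c-states are `1`, as the edges leaving the `end` vertices require.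
-/

open Function SimpleGraph Finset

lemma DiffOne.symm {N : ℕ} {α : Type*} {p q : Fin N → α} (h : DiffOne p q) : DiffOne q p :=
  let ⟨i, hi, hj⟩ := h
  ⟨i, Ne.symm hi, fun j hji => (hj j hji).symm⟩

lemma DiffOne.map {N : ℕ} {α β : Type*} {p q : Fin N → α} (h : DiffOne p q)
    (f : Fin N → α → β) (hf : ∀ j, Injective (f j)) :
    DiffOne (fun j => f j (p j)) (fun j => f j (q j)) :=
  let ⟨i, hi, hj⟩ := h
  ⟨i, (hf i).ne hi, fun j hji => congrArg (f j) (hj j hji)⟩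

lemma diffOne_update {N : ℕ} {α : Type*} [DecidableEq α] (p : Fin N → α) {i : Fin N} {x : α}
    (hx : p i ≠ x) : DiffOne p (update p i x) :=
  ⟨i, by simpa using hx, fun j hj => (update_of_ne hj x p).symm⟩

/-- The reconfiguration graph of shortest `(s,t)`-paths; sequences that are not shortest
`(s,t)`-paths are isolated vertices. -/
def reconfGraph (n m : ℕ) (φ : Fin m → Finset (Fin n × Bool)) :
    SimpleGraph (Fin (2 * m + 1 + 1) → PVert n m) where
  Adj p q := IsStPath n m φ p ∧ IsStPath n m φ q ∧ DiffOne p q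
  symm := ⟨fun _ _ h => ⟨h.2.1, h.1, h.2.2.symm⟩⟩
  loopless := ⟨fun _ h => let ⟨_, hi, _⟩ := h.2.2; hi rfl⟩

lemma SimpleGraph.edist_le_add_of_le {V : Type*} {G : SimpleGraph V} {u v w : V} {a b : ℕ}
    (huv : G.edist u v ≤ a) (hvw : G.edist v w ≤ b) : G.edist u w ≤ (a + b : ℕ) := by
  push_cast
  exact G.edist_triangle.trans (add_le_add huv hvw)

section Reconfiguration

variable {n m : ℕ} {φ : Fin m → Finset (Fin n × Bool)}

lemma exists_pReconfSeq_of_edist_le {p q : Fin (2 * m + 1 + 1) → PVert n m} {L : ℕ}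
    (hq : IsStPath n m φ q) (h : (reconfGraph n m φ).edist p q ≤ L) :
    ∃ ℓ ≤ L, ∃ ρ, PReconfSeq n m φ ρ ℓ p q := by
  obtain ⟨w, hw⟩ := exists_walk_of_edist_ne_top (h.trans_lt (ENat.natCast_lt_top L)).ne
  refine ⟨w.length, by exact_mod_cast hw ▸ h, w.getVert, w.getVert_zero, w.getVert_length,
    fun i hi => ?_, fun i hi => (w.adj_getVert_succ hi).2.2⟩
  rcases hi.lt_or_eq with hi | rfl
  · exact (w.adj_getVert_succ hi).1
  · rwa [w.getVert_length]

/-- The sequence `(s, f 0, …, f (2m-1), t)`. -/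
def frame (f : Fin (2 * m) → PVert n m) : Fin (2 * m + 1 + 1) → PVert n m := fun d =>
  if h0 : (d : ℕ) = 0 then PVert.s
  else if h1 : (d : ℕ) ≤ 2 * m then f ⟨(d : ℕ) - 1, by omega⟩
  else PVert.t

lemma pbP_eq_frame : pbP n m = frame PVert.beg := rfl

lemma peP_eq_frame : peP n m = frame PVert.en := rfl

lemma frame_apply_succ (f : Fin (2 * m) → PVert n m) (j : Fin (2 * m)) :
    frame f ⟨j + 1, by omega⟩ = f j := by
  simp [frame, Nat.succ_le_of_lt j.isLt]

def IsInnerPath (φ : Fin m → Finset (Fin n × Bool)) (f : Fin (2 * m) → PVert n m) : Prop :=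
  (∀ j, (f j).depth = j + 1) ∧
    ∀ j j' : Fin (2 * m), (j' : ℕ) = j + 1 → PEdge n m φ (f j) (f j')

lemma PEdge.of_s {b : PVert n m} (hb : b.depth = 1) : PEdge n m φ PVert.s b := by
  iterate 9 right
  exact Or.inl ⟨rfl, hb⟩

lemma PEdge.to_t {a : PVert n m} (ha : a.depth = 2 * m) : PEdge n m φ a PVert.t := by
  iterate 10 right
  exact ⟨ha, rfl⟩

lemma IsInnerPath.depth_frame {f : Fin (2 * m) → PVert n m} (hf : IsInnerPath φ f)
    (d : Fin (2 * m + 1 + 1)) : (frame f d).depth = d := by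
  unfold frame
  split_ifs with h0 h1
  · simp [PVert.depth, h0]
  · rw [hf.1]; simp only; omega
  · simp only [PVert.depth]; omega

lemma IsInnerPath.isStPath_frame {f : Fin (2 * m) → PVert n m} (hf : IsInnerPath φ f) :
    IsStPath n m φ (frame f) := by
  refine ⟨by simp [frame], by simp [frame], fun k => ?_, hf.depth_frame⟩
  by_cases hk0 : (k : ℕ) = 0
  · have : frame f k.castSucc = PVert.s := by simp [frame, hk0]
    rw [this]
    exact PEdge.of_s (by rw [hf.depth_frame]; simp [hk0])
  by_cases hk : (k : ℕ) = 2 * m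
  · have : frame f k.succ = PVert.t := by simp [frame, hk]
    rw [this]
    exact PEdge.to_t (by rw [hf.depth_frame]; simp [hk])
  have hcs : k.castSucc = ⟨((⟨k - 1, by omega⟩ : Fin (2 * m)) : ℕ) + 1, by simp⟩ :=
    Fin.ext (by simp; omega)
  have hs : k.succ = ⟨((⟨k, by omega⟩ : Fin (2 * m)) : ℕ) + 1, by simp; omega⟩ :=
    Fin.ext (by simp)
  rw [hcs, hs, frame_apply_succ, frame_apply_succ]
  exact hf.2 _ _ (by simp; omega)

lemma DiffOne.frame {f g : Fin (2 * m) → PVert n m} (h : DiffOne f g) :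
    DiffOne (frame f) (frame g) := by
  obtain ⟨j₀, hne, heq⟩ := h
  refine ⟨⟨j₀ + 1, by omega⟩, by rwa [frame_apply_succ, frame_apply_succ], fun d hd => ?_⟩
  unfold _root_.frame
  split_ifs with h0 h1
  · rfl
  · exact heq _ fun h => hd (Fin.ext (by simp [← h]; omega))
  · rfl

lemma IsInnerPath.edist_frame_le_one {f g : Fin (2 * m) → PVert n m} (hf : IsInnerPath φ f)
    (hg : IsInnerPath φ g) (h : DiffOne f g) :
    (reconfGraph n m φ).edist (frame f) (frame g) ≤ 1 :=
  edist_le_one_iff_adj_or_eq.2 (Or.inl ⟨hf.isStPath_frame, hg.isStPath_frame, h.frame⟩)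

def sweep (f g : Fin (2 * m) → PVert n m) (k : ℕ) : Fin (2 * m) → PVert n m := fun j =>
  if (j : ℕ) < k then g j else f j

lemma sweep_zero (f g : Fin (2 * m) → PVert n m) : sweep f g 0 = f := rfl

lemma sweep_two_mul (f g : Fin (2 * m) → PVert n m) : sweep f g (2 * m) = g :=
  funext fun j => if_pos j.isLt

lemma isInnerPath_sweep {f g : Fin (2 * m) → PVert n m} (hf : IsInnerPath φ f)
    (hg : IsInnerPath φ g)
    (hgf : ∀ j j' : Fin (2 * m), (j' : ℕ) = j + 1 → PEdge n m φ (g j) (f j'))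
    (k : ℕ) : IsInnerPath φ (sweep f g k) := by
  refine ⟨fun j => ?_, fun j j' hj => ?_⟩
  · unfold sweep; split_ifs
    exacts [hg.1 j, hf.1 j]
  · unfold sweep; split_ifs with h h' h'
    exacts [hg.2 j j' hj, hgf j j' hj, by omega, hf.2 j j' hj]

/-- Replace the inner vertices of `f` by those of `g` one at a time, from left to right;
`hgf` provides the edge where the two parts meet. -/
lemma edist_frame_le_of_sweep {f g : Fin (2 * m) → PVert n m} (hf : IsInnerPath φ f)
    (hg : IsInnerPath φ g)
    (hgf : ∀ j j' : Fin (2 * m), (j' : ℕ) = j + 1 → PEdge n m φ (g j) (f j'))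
    (hne : ∀ j, f j ≠ g j) :
    (reconfGraph n m φ).edist (frame f) (frame g) ≤ (2 * m : ℕ) := by
  have hsweep : ∀ k ≤ 2 * m,
      (reconfGraph n m φ).edist (frame f) (frame (sweep f g k)) ≤ k := by
    intro k
    induction k with
    | zero => intro; simp [sweep_zero]
    | succ k ih =>
      intro hk
      refine edist_le_add_of_le (ih (by omega)) ((isInnerPath_sweep hf hg hgf k).edist_frame_le_one
        (isInnerPath_sweep hf hg hgf (k + 1)) ⟨⟨k, by omega⟩, by simpa [sweep] using hne _,
          fun j hj => ?_⟩)
      have : (j : ℕ) ≠ k := fun h => hj (Fin.ext h)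
      simp only [sweep]
      split_ifs <;> first | rfl | omega
  simpa [sweep_two_mul] using hsweep (2 * m) le_rfl

end Reconfiguration

section Gadgets

variable {n m : ℕ} {φ : Fin m → Finset (Fin n × Bool)}

/-- The clause `C_{jc+1}` whose two gadget depths `2jc+1, 2jc+2` contain the depth `j+1`. -/
def block (j : Fin (2 * m)) : Fin m := ⟨j / 2, by omega⟩

/-- The inner vertices of the path running through the gadget of `x_{i+1} = vs` with
c-states `c`. -/
def levelRow (i : Fin n) (vs : Bool) (c : Fin (2 * m) → Bool) : Fin (2 * m) → PVert n m :=
  fun j => PVert.v i vs (c j) j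

def blockPattern (S : Finset (Fin m)) (j : Fin (2 * m)) : Bool := decide (block j ∈ S)

lemma PEdge.beg_beg {j j' : Fin (2 * m)} (hj : (j' : ℕ) = j + 1) :
    PEdge n m φ (PVert.beg j) (PVert.beg j') := by
  iterate 5 right
  exact Or.inl ⟨j, j', hj, rfl, rfl⟩

lemma PEdge.en_en {j j' : Fin (2 * m)} (hj : (j' : ℕ) = j + 1) :
    PEdge n m φ (PVert.en j) (PVert.en j') := by
  iterate 6 right
  exact Or.inl ⟨j, j', hj, rfl, rfl⟩

lemma PEdge.v_beg {i : Fin n} (hi : (i : ℕ) = 0) (vs : Bool) {j j' : Fin (2 * m)}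
    (hj : (j' : ℕ) = j + 1) : PEdge n m φ (PVert.v i vs false j) (PVert.beg j') := by
  iterate 7 right
  exact Or.inl ⟨i, vs, j, j', hi, hj, rfl, rfl⟩

lemma PEdge.en_v {i : Fin n} (hi : (i : ℕ) + 1 = n) (vs : Bool) {j j' : Fin (2 * m)}
    (hj : (j' : ℕ) = j + 1) : PEdge n m φ (PVert.en j) (PVert.v i vs true j') := by
  iterate 8 right
  exact Or.inl ⟨i, vs, j, j', hi, hj, rfl, rfl⟩

lemma PEdge.v_v {i : Fin n} {vs b b' : Bool} {j j' : Fin (2 * m)} (hj : (j' : ℕ) = j + 1)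
    (h : b = b' ∨ (j : ℕ) % 2 = 1 ∨ (b = true ∧ b' = false ∧ (i, vs) ∈ φ (block j))) :
    PEdge n m φ (PVert.v i vs b j) (PVert.v i vs b' j') := by
  by_cases hodd : (j : ℕ) % 2 = 1
  · obtain rfl | rfl : b' = b ∨ b' = !b := by cases b <;> cases b' <;> simp
    exacts [Or.inl ⟨i, vs, b', j, j', hj, rfl, rfl⟩,
      Or.inr (Or.inl ⟨i, vs, b, j, j', hj, hodd, rfl, rfl⟩)]
  rcases h with rfl | hodd' | ⟨rfl, rfl, hmem⟩
  · exact Or.inl ⟨i, vs, b, j, j', hj, rfl, rfl⟩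
  · exact absurd hodd' hodd
  · exact Or.inr (Or.inr (Or.inl
      ⟨i, vs, j, j', block j, hj, by simp [block]; omega, hmem, rfl, rfl⟩))

lemma PEdge.v_v_of_level_succ {ihi ilo : Fin n} (hi : (ihi : ℕ) = ilo + 1) {vs' vs b b' : Bool}
    {j j' : Fin (2 * m)} (hj : (j' : ℕ) = j + 1) (h : b = b' ∨ (j : ℕ) % 2 = 1) :
    PEdge n m φ (PVert.v ihi vs' b j) (PVert.v ilo vs b' j') := by
  iterate 3 right
  rcases h with rfl | hodd
  · exact Or.inl ⟨ihi, ilo, vs', vs, b, j, j', hi, hj, rfl, rfl⟩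
  · obtain rfl | rfl : b' = b ∨ b' = !b := by cases b <;> cases b' <;> simp
    exacts [Or.inl ⟨ihi, ilo, vs', vs, b', j, j', hi, hj, rfl, rfl⟩,
      Or.inr (Or.inl ⟨ihi, ilo, vs', vs, b, j, j', hi, hj, hodd, rfl, rfl⟩)]

lemma isInnerPath_beg : IsInnerPath φ (PVert.beg (n := n) (m := m)) :=
  ⟨fun _ => rfl, fun _ _ => PEdge.beg_beg⟩

lemma isInnerPath_en : IsInnerPath φ (PVert.en (n := n) (m := m)) :=
  ⟨fun _ => rfl, fun _ _ => PEdge.en_en⟩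

lemma isInnerPath_levelRow {i : Fin n} {vs : Bool} {c : Fin (2 * m) → Bool}
    (hc : ∀ j j' : Fin (2 * m), (j' : ℕ) = j + 1 →
      c j = c j' ∨ (j : ℕ) % 2 = 1 ∨
        (c j = true ∧ c j' = false ∧ (i, vs) ∈ φ (block j))) :
    IsInnerPath φ (levelRow i vs c) :=
  ⟨fun _ => rfl, fun j j' hj => PEdge.v_v hj (hc j j' hj)⟩

lemma blockPattern_eq_or_odd (S : Finset (Fin m)) {j j' : Fin (2 * m)} (hj : (j' : ℕ) = j + 1) :
    blockPattern S j = blockPattern S j' ∨ (j : ℕ) % 2 = 1 := by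
  by_cases hodd : (j : ℕ) % 2 = 1
  · exact Or.inr hodd
  · have : block j = block j' := Fin.ext (by simp [block]; omega)
    simp [blockPattern, this]

lemma isInnerPath_levelRow_blockPattern (i : Fin n) (vs : Bool) (S : Finset (Fin m)) :
    IsInnerPath φ (levelRow i vs (blockPattern S)) :=
  isInnerPath_levelRow fun _ _ hj => (blockPattern_eq_or_odd S hj).imp_right Or.inl

lemma DiffOne.levelRow {c c' : Fin (2 * m) → Bool} (h : DiffOne c c') (i : Fin n) (vs : Bool) :
    DiffOne (levelRow i vs c) (levelRow i vs c') :=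
  h.map (fun j b => PVert.v i vs b j) fun _ _ _ hb => by simpa using hb

end Gadgets

section Moves

variable {n m : ℕ} {φ : Fin m → Finset (Fin n × Bool)}

lemma edist_pbP_levelRow_le {i : Fin n} (hi : (i : ℕ) = 0) (vs : Bool) :
    (reconfGraph n m φ).edist (pbP n m) (frame (levelRow i vs (blockPattern ∅)))
      ≤ (2 * m : ℕ) :=
  edist_frame_le_of_sweep isInnerPath_beg (isInnerPath_levelRow_blockPattern i vs ∅)
    (fun _ _ hj => by simpa [levelRow, blockPattern] using PEdge.v_beg (φ := φ) hi vs hj)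
    (fun _ => by simp [levelRow])

lemma edist_levelRow_peP_le {i : Fin n} (hi : (i : ℕ) + 1 = n) (vs : Bool) :
    (reconfGraph n m φ).edist (frame (levelRow i vs (blockPattern univ))) (peP n m)
      ≤ (2 * m : ℕ) :=
  edist_frame_le_of_sweep (isInnerPath_levelRow_blockPattern i vs _) isInnerPath_en
    (fun _ _ hj => by simpa [levelRow, blockPattern] using PEdge.en_v (φ := φ) hi vs hj)
    (fun _ => by simp [levelRow])

lemma edist_levelRow_levelRow_le {ilo ihi : Fin n} (hi : (ihi : ℕ) = ilo + 1) (vslo vshi : Bool)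
    (S : Finset (Fin m)) :
    (reconfGraph n m φ).edist (frame (levelRow ilo vslo (blockPattern S)))
      (frame (levelRow ihi vshi (blockPattern S))) ≤ (2 * m : ℕ) :=
  edist_frame_le_of_sweep (isInnerPath_levelRow_blockPattern _ _ _)
    (isInnerPath_levelRow_blockPattern _ _ _)
    (fun _ _ hj => PEdge.v_v_of_level_succ hi hj (blockPattern_eq_or_odd S hj))
    (fun _ h => by simp only [levelRow, PVert.v.injEq, Fin.ext_iff] at h; omega)

/-- The intermediate path turns the block of `a` to c-states `1, 0`, which the formula edge
of clause `a` allows. -/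
lemma edist_flip_block_le {i : Fin n} {vs : Bool} {a : Fin m} (ha : (i, vs) ∈ φ a)
    {S : Finset (Fin m)} (haS : a ∉ S) :
    (reconfGraph n m φ).edist (frame (levelRow i vs (blockPattern S)))
      (frame (levelRow i vs (blockPattern (insert a S)))) ≤ (2 : ℕ) := by
  set j₀ : Fin (2 * m) := ⟨2 * a, by omega⟩
  set j₁ : Fin (2 * m) := ⟨2 * a + 1, by omega⟩
  set c := update (blockPattern S) j₀ true
  have hblock : ∀ j : Fin (2 * m), block j = a ↔ j = j₀ ∨ j = j₁ := by
    intro j; simp only [block, j₀, j₁, Fin.ext_iff]; omega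
  have hj₁₀ : j₁ ≠ j₀ := by simp [j₀, j₁, Fin.ext_iff]
  have hS₀ : blockPattern S j₀ = false := by
    simp [blockPattern, (hblock j₀).2 (.inl rfl), haS]
  have hS₁ : blockPattern S j₁ = false := by
    simp [blockPattern, (hblock j₁).2 (.inr rfl), haS]
  have hc : blockPattern (insert a S) = update c j₁ true := by
    funext j
    by_cases h₁ : j = j₁
    · simp [h₁, blockPattern, (hblock j₁).2 (.inr rfl)]
    by_cases h₀ : j = j₀
    · simp [c, h₀, blockPattern, (hblock j₀).2 (.inl rfl), hj₁₀.symm]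
    · have : block j ≠ a := fun h => ((hblock j).1 h).elim h₀ h₁
      simp [c, h₀, h₁, blockPattern, this]
  have hcInner : IsInnerPath φ (levelRow i vs c) := by
    refine isInnerPath_levelRow fun j j' hj => ?_
    by_cases h₀ : j = j₀
    · have h₁ : j' = j₁ := Fin.ext (by simp [j₁, hj, h₀, j₀])
      subst h₀ h₁
      exact Or.inr (Or.inr ⟨by simp [c], by simp [c, hj₁₀, hS₁],
        by rwa [(hblock j₀).2 (.inl rfl)]⟩)
    by_cases h₀' : j' = j₀
    · exact Or.inr (Or.inl (by simp only [h₀', j₀] at hj; omega))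
    · simpa [c, h₀, h₀'] using (blockPattern_eq_or_odd S hj).imp_right Or.inl
  show _ ≤ ((1 + 1 : ℕ) : ℕ∞)
  refine edist_le_add_of_le ((isInnerPath_levelRow_blockPattern i vs S).edist_frame_le_one
    hcInner ((diffOne_update _ (by simp [hS₀])).levelRow i vs)) ?_
  have hInner' := isInnerPath_levelRow_blockPattern (φ := φ) i vs (insert a S)
  rw [hc] at hInner' ⊢
  exact hcInner.edist_frame_le_one hInner'
    ((diffOne_update _ (by simp [c, hj₁₀, hS₁])).levelRow i vs)

lemma edist_flip_blocks_le {i : Fin n} {vs : Bool} {S T : Finset (Fin m)}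
    (hT : ∀ a ∈ T, (i, vs) ∈ φ a) (hST : Disjoint S T) :
    (reconfGraph n m φ).edist (frame (levelRow i vs (blockPattern S)))
      (frame (levelRow i vs (blockPattern (S ∪ T)))) ≤ (2 * #T : ℕ) := by
  induction T using Finset.induction_on with
  | empty => simp
  | insert a T haT ih =>
    rw [union_insert, card_insert_of_notMem haT, mul_add_one]
    refine edist_le_add_of_le (ih (fun b hb => hT b (mem_insert_of_mem hb))
      (hST.mono_right (subset_insert a T))) (edist_flip_block_le (hT a (mem_insert_self a T)) ?_)
    simp [haT, disjoint_right.1 hST (mem_insert_self a T)]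

lemma edist_pbP_levelRow_le_of_witness {θ : Fin n → Bool} {w : Fin m → Fin n}
    (hw : ∀ a, (w a, θ (w a)) ∈ φ a) (i : ℕ) (hi : i < n) :
    (reconfGraph n m φ).edist (pbP n m)
      (frame (levelRow ⟨i, hi⟩ (θ ⟨i, hi⟩) (blockPattern {a | (w a : ℕ) ≤ i})))
      ≤ (2 * m * (i + 1) + 2 * #{a | (w a : ℕ) ≤ i} : ℕ) := by
  have hT : ∀ k (hk : k < n), ∀ a ∈ ({a | (w a : ℕ) = k} : Finset (Fin m)),
      (⟨k, hk⟩, θ ⟨k, hk⟩) ∈ φ a := by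
    intro k hk a ha
    rw [← show w a = ⟨k, hk⟩ from Fin.ext (by simpa using ha)]
    exact hw a
  induction i with
  | zero =>
    have hflip := edist_flip_blocks_le (hT 0 hi) (disjoint_empty_left _)
    simp only [empty_union, Nat.le_zero] at hflip ⊢
    simpa using edist_le_add_of_le (edist_pbP_levelRow_le rfl _) hflip
  | succ i ih =>
    have hsplit : ({a | (w a : ℕ) ≤ i + 1} : Finset (Fin m))
        = ({a | (w a : ℕ) ≤ i} : Finset (Fin m)) ∪
          ({a | (w a : ℕ) = i + 1} : Finset (Fin m)) := by
      ext a; simp only [mem_union, mem_filter, mem_univ, true_and]; omega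
    have hdisj : Disjoint ({a | (w a : ℕ) ≤ i} : Finset (Fin m))
        ({a | (w a : ℕ) = i + 1} : Finset (Fin m)) :=
      disjoint_filter.2 fun _ _ h => by omega
    rw [hsplit, card_union_of_disjoint hdisj]
    have hsweep := edist_levelRow_levelRow_le (φ := φ) (ilo := ⟨i, by omega⟩)
      (ihi := ⟨i + 1, hi⟩) rfl (θ ⟨i, by omega⟩) (θ ⟨i + 1, hi⟩) {a | (w a : ℕ) ≤ i}
    exact (edist_le_add_of_le (edist_le_add_of_le (ih (by omega)) hsweep)
      (edist_flip_blocks_le (hT _ hi) hdisj)).trans (Nat.cast_le.2 (le_of_eq (by ring)))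

end Moves

theorem stmt7_general (n m : ℕ) (hn : 1 ≤ n) (φ : Fin m → Finset (Fin n × Bool))
    (hsat : ∃ θ : Fin n → Bool, ∀ jc : Fin m, ∃ i : Fin n, (i, θ i) ∈ φ jc) :
    ∃ ℓ ≤ 2 * m * (n + 2), ∃ ρ : ℕ → (Fin (2 * m + 1 + 1) → PVert n m),
      PReconfSeq n m φ ρ ℓ (pbP n m) (peP n m) := by
  obtain ⟨θ, hθ⟩ := hsat
  choose w hw using hθ
  have hlast : n - 1 + 1 = n := by omega
  have hall : ({a | (w a : ℕ) ≤ n - 1} : Finset (Fin m)) = univ :=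
    filter_true_of_mem fun a _ => by omega
  have hreach := edist_le_add_of_le (edist_pbP_levelRow_le_of_witness hw (n - 1) (by omega))
    (hall ▸ edist_levelRow_peP_le (φ := φ) (i := ⟨n - 1, by omega⟩) hlast _)
  have hcard := (card_filter_le univ fun a => (w a : ℕ) ≤ n - 1).trans_eq (card_fin m)
  refine exists_pReconfSeq_of_edist_le (peP_eq_frame ▸ isInnerPath_en.isStPath_frame)
    (hreach.trans (Nat.cast_le.2 ?_))
  rw [hlast]
  nlinarith

/-- if `φ` is satisfiable, then there is a reconfiguration sequence from
`p_b` to `p_e` in `G_φ` of length at most `2m(n+2)`. -/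
theorem stmt7 (n m : ℕ) (hn : 1 ≤ n) (hm : 1 ≤ m) (φ : Fin m → Finset (Fin n × Bool))
    (hsat : ∃ θ : Fin n → Bool, ∀ jc : Fin m, ∃ i : Fin n, (i, θ i) ∈ φ jc) :
    ∃ ℓ ≤ 2 * m * (n + 2), ∃ ρ : ℕ → (Fin (2 * m + 1 + 1) → PVert n m),
      PReconfSeq n m φ ρ ℓ (pbP n m) (peP n m) :=
  stmt7_general n m hn φ hsat
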